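/- Let X be a lower Hessenberg matrix (X ∈ ε + 𝔟_-, i.e. superdiagonal entries equal 1, entries above the superdiagonal equal 0). Then det(X - ηI)_{(r)}, the determinant of the matrix obtained by removing the first r rows and last r columns of X - ηI, is a polynomial in η of degree n - 2r whose leading coefficient is (-1)^{n-2r} times a polynomial in the entries of X strictly below the diagonal. -/

import Mathlib

/-!
In the chop of `X - η I`, the variable `η` occurs only in the entries `(a, a + r)`, and there
linearly. Hence column `b` has `η`-degree at most `[r ≤ b]`, these bounds add up to `n - 2r`, and
the coefficient of `η ^ (n - 2r)` in the determinant is the determinant of the matrix of top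
column coefficients. Its columns `b < r` are the entries `X (a + r) b`, all strictly below the
diagonal, and its other columns are constant.
-/
open Matrix Polynomial

/-- The `r`-chop characteristic polynomial `det (X - η I)_{(r)}`: the determinant (as a
polynomial in `η`) of the matrix obtained from `X - η I` by deleting the first `r` rows
and the last `r` columns. -/
noncomputable def chopDet (n r : ℕ) (hr : 2 * r ≤ n) (X : Matrix (Fin n) (Fin n) ℝ) :
    Polynomial ℝ :=
  Matrix.det
    ((X.map (Polynomial.C) - (Polynomial.X : Polynomial ℝ) • 1).submatrix
      (fun i : Fin (n - r) => (⟨(i : ℕ) + r, by have := i.isLt; omega⟩ : Fin n))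
      (fun j : Fin (n - r) => (⟨(j : ℕ), by have := j.isLt; omega⟩ : Fin n)))

/-- `X` is lower Hessenberg: superdiagonal entries equal `1`, entries above the
superdiagonal vanish. -/
def IsLowerHessenberg {n : ℕ} (X : Matrix (Fin n) (Fin n) ℝ) : Prop :=
  (∀ i j : Fin n, (j : ℕ) = (i : ℕ) + 1 → X i j = 1) ∧
  (∀ i j : Fin n, (i : ℕ) + 1 < (j : ℕ) → X i j = 0)

namespace Polynomial

variable {R ι : Type*} [CommRing R]

theorem coeff_prod_sum_of_natDegree_le (s : Finset ι) (f : ι → R[X]) (d : ι → ℕ)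
    (h : ∀ i ∈ s, (f i).natDegree ≤ d i) :
    (∏ i ∈ s, f i).coeff (∑ i ∈ s, d i) = ∏ i ∈ s, (f i).coeff (d i) := by
  classical
  induction s using Finset.cons_induction with
  | empty => simp
  | cons a s _ ih =>
    have hs : ∀ i ∈ s, (f i).natDegree ≤ d i := fun i hi => h i (Finset.mem_cons_of_mem hi)
    rw [Finset.prod_cons, Finset.sum_cons, Finset.prod_cons,
      coeff_mul_add_eq_of_natDegree_le (h a (Finset.mem_cons_self a s))
        ((natDegree_prod_le s f).trans (Finset.sum_le_sum hs)), ih hs]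

variable [Fintype ι] [DecidableEq ι]

theorem natDegree_det_le_of_natDegree_le (M : Matrix ι ι R[X]) (d : ι → ℕ)
    (h : ∀ i j, (M i j).natDegree ≤ d j) : M.det.natDegree ≤ ∑ j, d j := by
  rw [Matrix.det_apply']
  refine natDegree_sum_le_of_forall_le _ _ fun σ _ => natDegree_mul_le.trans ?_
  rw [natDegree_intCast, zero_add]
  exact (natDegree_prod_le _ _).trans (Finset.sum_le_sum fun j _ => h (σ j) j)

theorem coeff_det_of_natDegree_le (M : Matrix ι ι R[X]) (d : ι → ℕ)
    (h : ∀ i j, (M i j).natDegree ≤ d j) :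
    M.det.coeff (∑ j, d j) = (Matrix.of fun i j => (M i j).coeff (d j)).det := by
  simp only [Matrix.det_apply', finsetSum_coeff, coeff_intCast_mul, Matrix.of_apply]
  refine Finset.sum_congr rfl fun σ _ => ?_
  rw [coeff_prod_sum_of_natDegree_le _ _ _ fun j _ => h (σ j) j]

end Polynomial

theorem Fin.sum_boole_le_val (m r : ℕ) :
    ∑ j : Fin m, (if r ≤ (j : ℕ) then 1 else 0) = m - r := by
  rw [Fin.sum_univ_eq_sum_range (fun j => if r ≤ j then 1 else 0), Finset.sum_boole,
    Nat.cast_id, Finset.range_eq_Ico, Finset.Ico_filter_le, Nat.card_Ico, Nat.zero_max]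

section Chop

variable (n r : ℕ)

def chopRow (a : Fin (n - r)) : Fin n := ⟨a + r, by omega⟩

def chopCol (b : Fin (n - r)) : Fin n := ⟨b, by omega⟩

lemma chopDet_eq_det (hr : 2 * r ≤ n) (A : Matrix (Fin n) (Fin n) ℝ) :
    chopDet n r hr A =
      (Matrix.of fun a b => C (A (chopRow n r a) (chopCol n r b)) -
        if (a : ℕ) + r = b then X else 0).det := by
  unfold chopDet
  congr 1
  ext a b : 1
  simp [chopRow, chopCol, Matrix.one_apply, Fin.ext_iff]

/-- Entry `(a, b)` is the coefficient of `η ^ [r ≤ b]` in the chop, with the entries of the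
matrix replaced by variables. -/
noncomputable def chopLeadingMatrix : Matrix (Fin (n - r)) (Fin (n - r))
    (MvPolynomial {p : Fin n × Fin n // (p.2 : ℕ) < p.1} ℝ) :=
  Matrix.of fun a b =>
    if h : (b : ℕ) < r then MvPolynomial.X ⟨(chopRow n r a, chopCol n r b), by
      simp only [chopRow, chopCol]; omega⟩
    else if (a : ℕ) + r = b then -1 else 0

variable {n r}

lemma natDegree_chopEntry_le (x : ℝ) (a b : Fin (n - r)) :
    (C x - if (a : ℕ) + r = b then X else 0).natDegree ≤ if r ≤ (b : ℕ) then 1 else 0 := by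
  split_ifs <;> first | omega | simp | exact (natDegree_sub_le _ _).trans (by simp)

lemma coeff_chopEntry (A : Matrix (Fin n) (Fin n) ℝ) (a b : Fin (n - r)) :
    (C (A (chopRow n r a) (chopCol n r b)) - if (a : ℕ) + r = b then X else 0).coeff
        (if r ≤ (b : ℕ) then 1 else 0) =
      MvPolynomial.eval (fun p => A p.1.1 p.1.2) (chopLeadingMatrix n r a b) := by
  simp only [chopLeadingMatrix, Matrix.of_apply]
  split_ifs <;> first | omega | simp

end Chop

theorem chopDet_degree_leadingCoeff (n r : ℕ) (hr : 2 * r ≤ n) :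
    ∃ P : MvPolynomial {p : Fin n × Fin n // (p.2 : ℕ) < (p.1 : ℕ)} ℝ,
      ∀ X : Matrix (Fin n) (Fin n) ℝ, IsLowerHessenberg X →
        (chopDet n r hr X).natDegree ≤ n - 2 * r ∧
        (chopDet n r hr X).coeff (n - 2 * r) =
          (-1 : ℝ) ^ (n - 2 * r) *
            MvPolynomial.eval (fun p => X p.1.1 p.1.2) P := by
  refine ⟨(-1) ^ (n - 2 * r) * (chopLeadingMatrix n r).det, fun A _ => ?_⟩
  set M : Matrix (Fin (n - r)) (Fin (n - r)) ℝ[X] := Matrix.of fun a b =>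
    C (A (chopRow n r a) (chopCol n r b)) - if (a : ℕ) + r = b then X else 0
  have hM (a b) := natDegree_chopEntry_le (A (chopRow n r a) (chopCol n r b)) a b
  have hsum : ∑ j : Fin (n - r), (if r ≤ (j : ℕ) then 1 else 0) = n - 2 * r := by
    rw [Fin.sum_boole_le_val]; omega
  rw [chopDet_eq_det, ← hsum]
  refine ⟨natDegree_det_le_of_natDegree_le M _ hM, ?_⟩
  calc M.det.coeff _
        = MvPolynomial.eval (fun p => A p.1.1 p.1.2) (chopLeadingMatrix n r).det := by
        rw [coeff_det_of_natDegree_le M _ hM, RingHom.map_det]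
        congr 1
        ext a b
        exact coeff_chopEntry A a b
    _ = _ := by
        simp only [map_mul, map_pow, map_neg, map_one, ← mul_assoc, ← mul_pow]
        norm_num
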